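/- Let (mu, alpha) in Sigma_2^0 x Sigma_2^1 satisfy mu < sigma^i(mu) < alpha and mu <= sigma^j(alpha) < alpha for all i, j >= 1, with strictly increasing indices n_1 < n_2 < ... such that mu_{m+1}...mu_{n_k} > mu_1...mu_{n_k - m} for all 1 <= m < n_k (all k). Define mu^k := mu_1...mu_{n_k} (mu_1...mu_{n_{k+1}})^infty. Then mu^k < mu^{k+1} < mu lexicographically, mu^k converges to mu, and for all i >= 1: mu^k < sigma^i(mu^k) < alpha. -/

import Mathlib

/-- The one-sided left shift on binary sequences. -/
def shift (x : ℕ → Bool) : ℕ → Bool := fun n => x (n + 1)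

/-- Strict lexicographic order on binary sequences (`false < true`). -/
def lexLt (x y : ℕ → Bool) : Prop :=
  ∃ k : ℕ, (∀ i < k, x i = y i) ∧ x k < y k

/-- Non-strict lexicographic order on binary sequences. -/
def lexLe (x y : ℕ → Bool) : Prop := lexLt x y ∨ x = y

/-!
Put `N = n_k < P = n_{k+1}` and `p = (mu_1 … mu_P)^∞`, so that `mu^k = mu_1 … mu_N p`. The suffix
condition on `mu_1 … mu_P`, taken at `m = N`, places `mu^k` below every sequence beginning with
`mu_1 … mu_P`, such as `mu^{k+1}` and `mu`. A shift `σ^i mu^k` is either a shift of `mu` cut off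
inside `mu_1 … mu_N` and continued by `p`, or, by periodicity, `σ^r p` with `r < P`; in both
cases the suffix conditions give `mu^k < σ^i mu^k`. For the upper bound, such a shift agrees with
`σ^i mu < alpha` up to the cut and then continues as `p`, and `p < mu ≤ σ^j alpha` because `mu`
lies strictly below all its shifts.
-/

open Function

theorem shift_iterate_apply (i : ℕ) (x : ℕ → Bool) (s : ℕ) : shift^[i] x s = x (i + s) := by
  induction i generalizing s with
  | zero => simp
  | succ i ih => rw [iterate_succ_apply', shift, ih]; ring_nf

section Lex

variable {x y z : ℕ → Bool}

theorem lexLt_irrefl (x : ℕ → Bool) : ¬ lexLt x x := fun ⟨_, _, h⟩ => lt_irrefl _ h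

theorem lexLt_trans (hxy : lexLt x y) (hyz : lexLt y z) : lexLt x z := by
  obtain ⟨a, ha, ha'⟩ := hxy
  obtain ⟨b, hb, hb'⟩ := hyz
  rcases lt_trichotomy a b with h | rfl | h
  · exact ⟨a, fun i hi => (ha i hi).trans (hb i (hi.trans h)), hb a h ▸ ha'⟩
  · exact ⟨a, fun i hi => (ha i hi).trans (hb i hi), ha'.trans hb'⟩
  · exact ⟨b, fun i hi => (ha i (hi.trans h)).trans (hb i hi), (ha b h).symm ▸ hb'⟩

theorem lexLt_of_lt_of_le (hxy : lexLt x y) (hyz : lexLe y z) : lexLt x z := by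
  rcases hyz with h | rfl
  exacts [lexLt_trans hxy h, hxy]

theorem lexLt_trichotomy (x y : ℕ → Bool) : lexLt x y ∨ x = y ∨ lexLt y x := by
  classical
  by_cases h : x = y
  · exact Or.inr (Or.inl h)
  have hex : ∃ k, x k ≠ y k := Function.ne_iff.mp h
  have hagree : ∀ i < Nat.find hex, x i = y i := fun i hi => not_not.mp (Nat.find_min hex hi)
  rcases lt_or_gt_of_ne (Nat.find_spec hex) with hlt | hgt
  · exact Or.inl ⟨_, hagree, hlt⟩
  · exact Or.inr (Or.inr ⟨_, fun i hi => (hagree i hi).symm, hgt⟩)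

theorem lexLt_of_eqOn_of_shift_lt {L : ℕ} (hxy : ∀ s < L, x s = y s)
    (h : lexLt (shift^[L] x) (shift^[L] y)) : lexLt x y := by
  obtain ⟨u, hagree, hlt⟩ := h
  simp only [shift_iterate_apply] at hagree hlt
  refine ⟨L + u, fun s hs => ?_, hlt⟩
  rcases lt_or_ge s L with hsL | hsL
  · exact hxy s hsL
  · simpa [Nat.add_sub_cancel' hsL] using hagree (s - L) (by omega)

theorem lexLt_of_lt_of_eqOn_of_shift_lt {L : ℕ} (hyz : lexLt y z) (hxy : ∀ s < L, x s = y s)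
    (h : lexLt (shift^[L] x) (shift^[L] z)) : lexLt x z := by
  obtain ⟨t, hagree, hlt⟩ := hyz
  rcases lt_or_ge t L with htL | htL
  · exact ⟨t, fun s hs => (hxy s (hs.trans htL)).trans (hagree s hs), (hxy t htL).symm ▸ hlt⟩
  · exact lexLt_of_eqOn_of_shift_lt (fun s hs => (hxy s hs).trans (hagree s (by omega))) h

end Lex

/-- The paper's condition `w_{m+1} … w_L > w_1 … w_{L-m}` for `1 ≤ m < L` (indices here start
at `0`). -/
def SuffixesGtPrefixes (w : ℕ → Bool) (L : ℕ) : Prop :=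
  ∀ m, 1 ≤ m → m < L → ∃ t < L - m, (∀ s < t, w s = w (m + s)) ∧ w t < w (m + t)

theorem SuffixesGtPrefixes.lexLt {w x y : ℕ → Bool} {L m : ℕ} (hw : SuffixesGtPrefixes w L)
    (hm : 1 ≤ m) (hmL : m < L) (hx : ∀ s < L - m, x s = w s)
    (hy : ∀ s < L - m, y s = w (m + s)) : lexLt x y := by
  obtain ⟨t, htL, hagree, hlt⟩ := hw m hm hmL
  refine ⟨t, fun s hs => ?_, ?_⟩
  · rw [hx s (by omega), hy s (by omega), hagree s hs]
  · rwa [hx t htL, hy t htL]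

def periodize (w : ℕ → Bool) (P : ℕ) : ℕ → Bool := fun s => w (s % P)

section Periodize

variable {w : ℕ → Bool} {P : ℕ}

theorem periodize_of_lt {s : ℕ} (hs : s < P) : periodize w P s = w s := by
  rw [periodize, Nat.mod_eq_of_lt hs]

theorem isPeriodicPt_shift_periodize : IsPeriodicPt shift P (periodize w P) := by
  funext s
  rw [shift_iterate_apply, periodize, periodize, Nat.add_mod_left]

theorem periodize_add_mul {s q : ℕ} : periodize w P (P * q + s) = periodize w P s := by
  rw [periodize, periodize, Nat.mul_add_mod]

/-- If `w` lies strictly below all its shifts, then it is neither equal to its periodisation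
(that would make it `P`-periodic) nor below it (the first difference, at some `t ≥ P`, would
make `σ^{P ⌊t/P⌋} w < w`). -/
theorem periodize_lt (hw : ∀ i, 1 ≤ i → lexLt w (shift^[i] w)) (hP : 0 < P) :
    lexLt (periodize w P) w := by
  rcases lexLt_trichotomy (periodize w P) w with hlt | heq | ⟨t, hagree, hlt⟩
  · exact hlt
  · have hfix : shift^[P] w = w := heq ▸ isPeriodicPt_shift_periodize
    exact (lexLt_irrefl w (by simpa only [hfix] using hw P hP)).elim
  · have htP : P ≤ t := by
      by_contra! htP
      exact lt_irrefl _ ((periodize_of_lt htP).symm ▸ hlt)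
    have hq : 1 ≤ P * (t / P) := Nat.mul_pos hP (Nat.div_pos htP hP)
    have hdecomp : P * (t / P) + t % P = t := Nat.div_add_mod t P
    have hmod : t % P < P := Nat.mod_lt t hP
    refine absurd (lexLt_trans (hw _ hq) ⟨t % P, fun s hs => ?_, ?_⟩) (lexLt_irrefl w)
    · rw [shift_iterate_apply, hagree _ (by omega), periodize_add_mul, periodize_of_lt (by omega)]
    · rwa [shift_iterate_apply, hdecomp, ← periodize_of_lt (w := w) hmod, ← periodize_add_mul,
        hdecomp]

end Periodize

section PrefixThenPeriodic

variable {mu alpha x : ℕ → Bool} {N P : ℕ}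

theorem lt_shift_periodize (hsufP : SuffixesGtPrefixes mu P) {r : ℕ} (hr : 1 ≤ r) (hrP : r < P) :
    lexLt mu (shift^[r] (periodize mu P)) :=
  hsufP.lexLt hr hrP (fun _ _ => rfl)
    (fun s _ => by rw [shift_iterate_apply, periodize_of_lt (by omega)])

theorem shift_periodize_lt (hmu : ∀ i, lexLt (shift^[i] mu) alpha)
    (hpα : ∀ j, 1 ≤ j → lexLt (periodize mu P) (shift^[j] alpha)) {r : ℕ} (hrP : r < P) :
    lexLt (shift^[r] (periodize mu P)) alpha := by
  refine lexLt_of_lt_of_eqOn_of_shift_lt (L := P - r) (hmu r)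
    (fun s _ => by simp only [shift_iterate_apply, periodize_of_lt (show r + s < P by omega)]) ?_
  rw [← iterate_add_apply, Nat.sub_add_cancel hrP.le, isPeriodicPt_shift_periodize.eq]
  exact hpα _ (by omega)

/-! In the rest of this section `x = mu_0 … mu_{N-1} (mu_0 … mu_{P-1})^∞`. -/

theorem lexLt_of_prefix_periodic (hsufP : SuffixesGtPrefixes mu P) (hN : 1 ≤ N) (hNP : N < P)
    (hxN : ∀ i < N, x i = mu i) (hxtail : shift^[N] x = periodize mu P)
    {z : ℕ → Bool} (hz : ∀ i < P, z i = mu i) : lexLt x z := by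
  refine lexLt_of_eqOn_of_shift_lt (fun s hs => by rw [hxN s hs, hz s (by omega)]) ?_
  rw [hxtail]
  exact hsufP.lexLt hN hNP (fun s _ => periodize_of_lt (by omega))
    (fun s _ => by rw [shift_iterate_apply, hz _ (by omega)])

theorem shift_eq_shift_periodize (hxtail : shift^[N] x = periodize mu P) {i : ℕ} (hi : N ≤ i) :
    shift^[i] x = shift^[(i - N) % P] (periodize mu P) := by
  rw [isPeriodicPt_shift_periodize.iterate_mod_apply, ← hxtail, ← iterate_add_apply,
    Nat.sub_add_cancel hi]

theorem lexLt_shift_of_prefix_periodic (hsufN : SuffixesGtPrefixes mu N)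
    (hsufP : SuffixesGtPrefixes mu P) (hN : 1 ≤ N) (hNP : N < P)
    (hxN : ∀ i < N, x i = mu i) (hxtail : shift^[N] x = periodize mu P)
    {i : ℕ} (hi : 1 ≤ i) : lexLt x (shift^[i] x) := by
  rcases lt_or_ge i N with hiN | hiN
  · exact hsufN.lexLt hi hiN (fun s _ => hxN s (by omega))
      (fun s _ => by rw [shift_iterate_apply, hxN _ (by omega)])
  rw [shift_eq_shift_periodize hxtail hiN]
  have hrP : (i - N) % P < P := Nat.mod_lt _ (by omega)
  rcases Nat.eq_zero_or_pos ((i - N) % P) with hr | hr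
  · rw [hr]
    exact lexLt_of_prefix_periodic hsufP hN hNP hxN hxtail (fun s hs => periodize_of_lt hs)
  · exact lexLt_trans (lexLt_of_prefix_periodic hsufP hN hNP hxN hxtail fun _ _ => rfl)
      (lt_shift_periodize hsufP hr hrP)

theorem shift_lt_of_prefix_periodic (hmu : ∀ i, lexLt (shift^[i] mu) alpha)
    (hpα : ∀ j, 1 ≤ j → lexLt (periodize mu P) (shift^[j] alpha)) (hNP : N < P)
    (hxN : ∀ i < N, x i = mu i) (hxtail : shift^[N] x = periodize mu P) (i : ℕ) :
    lexLt (shift^[i] x) alpha := by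
  rcases lt_or_ge i N with hiN | hiN
  · refine lexLt_of_lt_of_eqOn_of_shift_lt (L := N - i) (hmu i)
      (fun s _ => by simp only [shift_iterate_apply, hxN (i + s) (by omega)]) ?_
    rw [← iterate_add_apply, Nat.sub_add_cancel hiN.le, hxtail]
    exact hpα _ (by omega)
  · rw [shift_eq_shift_periodize hxtail hiN]
    exact shift_periodize_lt hmu hpα (Nat.mod_lt _ (by omega))

end PrefixThenPeriodic

theorem stmt18_general (mu alpha : ℕ → Bool)
    (hU : ∀ i, 1 ≤ i → lexLt mu (shift^[i] mu) ∧ lexLt (shift^[i] mu) alpha)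
    (hA : ∀ j, 1 ≤ j → lexLe mu (shift^[j] alpha) ∧ lexLt (shift^[j] alpha) alpha)
    (n : ℕ → ℕ) (hmono : StrictMono n) (hn0 : 1 ≤ n 0)
    (hword : ∀ k, ∀ m, 1 ≤ m → m < n k →
      ∃ t < n k - m, (∀ s < t, mu s = mu (m + s)) ∧ mu t < mu (m + t))
    (muK : ℕ → ℕ → Bool)
    (hmuK : ∀ k, muK k = fun i => if i < n k then mu i else mu ((i - n k) % n (k + 1))) :
    (∀ k, lexLt (muK k) (muK (k + 1)) ∧ lexLt (muK k) mu) ∧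
    (∀ N : ℕ, ∃ K, ∀ k ≥ K, ∀ i < N, muK k i = mu i) ∧
    (∀ k, ∀ i, 1 ≤ i → lexLt (muK k) (shift^[i] (muK k)) ∧
      lexLt (shift^[i] (muK k)) alpha) := by
  have hN : ∀ k, 1 ≤ n k := fun k => hn0.trans (hmono.monotone k.zero_le)
  have hNP : ∀ k, n k < n (k + 1) := fun k => hmono k.lt_succ_self
  have hprefix : ∀ k, ∀ i < n k, muK k i = mu i := fun k i hi => by simp [hmuK, hi]
  have htail : ∀ k, shift^[n k] (muK k) = periodize mu (n (k + 1)) := fun k => by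
    funext s
    simp [shift_iterate_apply, hmuK, periodize]
  have hmu : ∀ i, lexLt (shift^[i] mu) alpha
    | 0 => lexLt_trans (hU 1 le_rfl).1 (hU 1 le_rfl).2
    | i + 1 => (hU (i + 1) (by omega)).2
  have hpα : ∀ k j, 1 ≤ j → lexLt (periodize mu (n (k + 1))) (shift^[j] alpha) :=
    fun k j hj => lexLt_of_lt_of_le (periodize_lt (fun i hi => (hU i hi).1) (hN _)) (hA j hj).1
  have hbelow : ∀ k {z : ℕ → Bool}, (∀ i < n (k + 1), z i = mu i) → lexLt (muK k) z :=
    fun k => lexLt_of_prefix_periodic (hword (k + 1)) (hN k) (hNP k) (hprefix k) (htail k)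
  refine ⟨fun k => ⟨hbelow k (hprefix (k + 1)), hbelow k fun _ _ => rfl⟩,
    fun K => ⟨K, fun k hk i hi => hprefix k i (by have := hmono.le_apply (x := k); omega)⟩,
    fun k i hi => ⟨?_, ?_⟩⟩
  · exact lexLt_shift_of_prefix_periodic (hword k) (hword (k + 1)) (hN k) (hNP k) (hprefix k)
      (htail k) hi
  · exact shift_lt_of_prefix_periodic hmu (hpα k) (hNP k) (hprefix k) (htail k) i

/-- Case (ii) construction: `mu^k = mu_1…mu_{n_k} (mu_1…mu_{n_{k+1}})^∞` increases to
`mu` and each `(mu^k, alpha)` lies in `U'_2`. -/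
theorem stmt18 (mu alpha : ℕ → Bool) (h0 : mu 0 = false) (ha0 : alpha 0 = true)
    (hU : ∀ i, 1 ≤ i → lexLt mu (shift^[i] mu) ∧ lexLt (shift^[i] mu) alpha)
    (hA : ∀ j, 1 ≤ j → lexLe mu (shift^[j] alpha) ∧ lexLt (shift^[j] alpha) alpha)
    (n : ℕ → ℕ) (hmono : StrictMono n) (hn0 : 1 ≤ n 0)
    (hword : ∀ k, ∀ m, 1 ≤ m → m < n k →
      ∃ t < n k - m, (∀ s < t, mu s = mu (m + s)) ∧ mu t < mu (m + t))
    (muK : ℕ → ℕ → Bool)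
    (hmuK : ∀ k, muK k = fun i => if i < n k then mu i else mu ((i - n k) % n (k + 1))) :
    (∀ k, lexLt (muK k) (muK (k + 1)) ∧ lexLt (muK k) mu) ∧
    (∀ N : ℕ, ∃ K, ∀ k ≥ K, ∀ i < N, muK k i = mu i) ∧
    (∀ k, ∀ i, 1 ≤ i → lexLt (muK k) (shift^[i] (muK k)) ∧
      lexLt (shift^[i] (muK k)) alpha) :=
  stmt18_general mu alpha hU hA n hmono hn0 hword muK hmuK
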